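/- Let f : ℝⁿ → ℝ be convex and differentiable with ∇f Lipschitz continuous with constant κ_f > 0. Let κ_g > 0, t ≥ 0, let 0 < α ≤ min(1/κ_g, 1/κ_f), and let x_k ∈ ℝⁿ with ‖∇f(x_k)‖ ≥ 5t/α. Suppose g ∈ ℝⁿ satisfies ‖g − ∇f(x_k)‖ ≤ t·κ_g, and set x_{k+1} = x_k − α·g. Then f(x_{k+1}) ≤ f(x_k) − 0.48·α·‖∇f(x_k)‖², and in particular f(x_{k+1}) ≤ f(x_k) − 12·t²/α. -/

import Mathlib

set_option maxHeartbeats 800000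
open scoped InnerProductSpace

lemma descent_lemma_aux {n : ℕ} (f : EuclideanSpace ℝ (Fin n) → ℝ)
    (hdiff : Differentiable ℝ f) (κf : ℝ) (hκf : 0 ≤ κf)
    (hlip : ∀ x y, ‖gradient f x - gradient f y‖ ≤ κf * ‖x - y‖)
    (x v : EuclideanSpace ℝ (Fin n)) :
    f (x + v) ≤ f x + ⟪gradient f x, v⟫_ℝ + κf / 2 * ‖v‖ ^ 2 := by
  have key : ∀ y w, (fderiv ℝ f y) w = ⟪gradient f y, w⟫_ℝ := by
    intro y w
    rw [gradient, ← InnerProductSpace.toDual_apply_apply, LinearIsometryEquiv.apply_symm_apply]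
  -- gradient is continuous
  have hgc : Continuous (fun y => gradient f y) := by
    apply LipschitzWith.continuous (K := κf.toNNReal)
    apply LipschitzWith.of_dist_le_mul
    intro a b
    simpa [dist_eq_norm, Real.coe_toNNReal κf hκf] using hlip a b
  have hline : Continuous (fun s : ℝ => x + s • v) := by continuity
  have hderiv : ∀ s : ℝ, HasDerivAt (fun s : ℝ => f (x + s • v))
      (⟪gradient f (x + s • v), v⟫_ℝ) s := by
    intro s
    have h1 : HasDerivAt (fun s : ℝ => x + s • v) v s := by
      simpa using ((hasDerivAt_id s).smul_const v).const_add x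
    have h2 := (hdiff (x + s • v)).hasFDerivAt.comp_hasDerivAt s h1
    rw [key] at h2; exact h2
  have hcont : Continuous (fun s : ℝ => ⟪gradient f (x + s • v), v⟫_ℝ) := by
    exact (hgc.comp hline).inner continuous_const
  have hFTC : ∫ s in (0:ℝ)..1, ⟪gradient f (x + s • v), v⟫_ℝ = f (x + v) - f x := by
    have := intervalIntegral.integral_eq_sub_of_hasDerivAt
      (f := fun s : ℝ => f (x + s • v)) (fun s _ => hderiv s)
      (hcont.intervalIntegrable 0 1)
    simpa using this
  have hbound : ∫ s in (0:ℝ)..1, ⟪gradient f (x + s • v), v⟫_ℝ ≤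
      ∫ s in (0:ℝ)..1, (⟪gradient f x, v⟫_ℝ + κf * s * ‖v‖ ^ 2) := by
    apply intervalIntegral.integral_mono_on (by norm_num)
      (hcont.intervalIntegrable 0 1)
      (((by fun_prop : Continuous fun s : ℝ => ⟪gradient f x, v⟫_ℝ + κf * s * ‖v‖ ^ 2)).intervalIntegrable 0 1)
    intro s hs
    have h1 : ⟪gradient f (x + s • v) - gradient f x, v⟫_ℝ ≤
        ‖gradient f (x + s • v) - gradient f x‖ * ‖v‖ :=
      real_inner_le_norm _ _
    have h2 : ‖gradient f (x + s • v) - gradient f x‖ ≤ κf * (s * ‖v‖) := by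
      have := hlip (x + s • v) x
      simpa [norm_smul, abs_of_nonneg hs.1] using this
    have h3 : ⟪gradient f (x + s • v) - gradient f x, v⟫_ℝ ≤ κf * s * ‖v‖ ^ 2 := by
      calc ⟪gradient f (x + s • v) - gradient f x, v⟫_ℝ ≤
          ‖gradient f (x + s • v) - gradient f x‖ * ‖v‖ := h1
        _ ≤ κf * (s * ‖v‖) * ‖v‖ := by
            apply mul_le_mul_of_nonneg_right h2 (norm_nonneg _)
        _ = κf * s * ‖v‖ ^ 2 := by ring
    have h4 : ⟪gradient f (x + s • v), v⟫_ℝ =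
        ⟪gradient f x, v⟫_ℝ + ⟪gradient f (x + s • v) - gradient f x, v⟫_ℝ := by
      rw [← inner_add_left]; congr 1; abel
    rw [h4]; linarith
  have hrhs : ∫ s in (0:ℝ)..1, (⟪gradient f x, v⟫_ℝ + κf * s * ‖v‖ ^ 2) =
      ⟪gradient f x, v⟫_ℝ + κf / 2 * ‖v‖ ^ 2 := by
    rw [intervalIntegral.integral_add (continuous_const.intervalIntegrable 0 1)
      (((by fun_prop : Continuous fun s : ℝ => κf * s * ‖v‖ ^ 2)).intervalIntegrable 0 1)]
    have h5 : ∫ s in (0:ℝ)..1, κf * s * ‖v‖ ^ 2 = κf * ‖v‖ ^ 2 * ∫ s in (0:ℝ)..1, s := by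
      rw [← intervalIntegral.integral_const_mul]
      congr 1; ext s; ring
    rw [intervalIntegral.integral_const, h5, integral_id]
    simp
    ring
  linarith [hFTC ▸ (hrhs ▸ hbound)]

theorem descent_step_large_gradient {n : ℕ}
    (f : EuclideanSpace ℝ (Fin n) → ℝ)
    (hconv : ConvexOn ℝ Set.univ f) (hdiff : Differentiable ℝ f)
    (κf : ℝ) (hκf : 0 < κf)
    (hlip : ∀ x y, ‖gradient f x - gradient f y‖ ≤ κf * ‖x - y‖)
    (κg t α : ℝ) (hκg : 0 < κg) (ht : 0 ≤ t)
    (hα0 : 0 < α) (hα : α ≤ min (1 / κg) (1 / κf))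
    (xk g : EuclideanSpace ℝ (Fin n))
    (hgrad : 5 * t / α ≤ ‖gradient f xk‖)
    (herr : ‖g - gradient f xk‖ ≤ t * κg) :
    f (xk - α • g) ≤ f xk - 0.48 * α * ‖gradient f xk‖ ^ 2 ∧
      f (xk - α • g) ≤ f xk - 12 * t ^ 2 / α := by
  have h1 : α * κg ≤ 1 := by
    have := (le_div_iff₀ hκg).mp (le_trans hα (min_le_left _ _)); linarith
  have h2 : α * κf ≤ 1 := by
    have := (le_div_iff₀ hκf).mp (le_trans hα (min_le_right _ _)); linarith
  have hE : ‖g - gradient f xk‖ ≤ t / α := by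
    refine herr.trans ?_
    rw [le_div_iff₀ hα0]
    nlinarith
  have hN : 5 * (t / α) ≤ ‖gradient f xk‖ := by
    rw [mul_div_assoc] at hgrad; exact hgrad
  have hE5 : ‖g - gradient f xk‖ ≤ ‖gradient f xk‖ / 5 := by linarith
  have main := descent_lemma_aux f hdiff κf hκf.le hlip xk (-(α • g))
  rw [← sub_eq_add_neg] at main
  have hin : ⟪gradient f xk, -(α • g)⟫_ℝ = -(α * ⟪gradient f xk, g⟫_ℝ) := by
    rw [inner_neg_right, real_inner_smul_right]
  have hnv : ‖-(α • g)‖ ^ 2 = α ^ 2 * ‖g‖ ^ 2 := by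
    rw [norm_neg, norm_smul, Real.norm_eq_abs, abs_of_pos hα0, mul_pow]
  rw [hin, hnv] at main
  have hq : ‖g - gradient f xk‖ ^ 2 =
      ‖g‖ ^ 2 - 2 * ⟪gradient f xk, g⟫_ℝ + ‖gradient f xk‖ ^ 2 := by
    rw [norm_sub_sq_real, real_inner_comm]
  have hg0 : (0:ℝ) ≤ ‖g‖ ^ 2 := sq_nonneg _
  have hG0 : (0:ℝ) ≤ ‖gradient f xk‖ := norm_nonneg _
  have hE0 : (0:ℝ) ≤ ‖g - gradient f xk‖ := norm_nonneg _
  have hA : 0 ≤ α * ‖g‖ ^ 2 * (1 - α * κf) :=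
    mul_nonneg (mul_nonneg hα0.le hg0) (by linarith)
  have hB : ‖g - gradient f xk‖ ^ 2 ≤ (‖gradient f xk‖ / 5) ^ 2 := by
    have := mul_self_le_mul_self hE0 hE5
    nlinarith
  have hC : 0 ≤ α * (‖gradient f xk‖ ^ 2 / 25 - ‖g - gradient f xk‖ ^ 2) := by
    apply mul_nonneg hα0.le; nlinarith
  have part1 : f (xk - α • g) ≤ f xk - 0.48 * α * ‖gradient f xk‖ ^ 2 := by
    nlinarith [mul_nonneg hα0.le hg0, hq, main, hA, hC]
  refine ⟨part1, ?_⟩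
  have h5t : (0:ℝ) ≤ 5 * t / α := by positivity
  have hNsq : (5 * t / α) ^ 2 ≤ ‖gradient f xk‖ ^ 2 := by
    exact pow_le_pow_left₀ h5t hgrad 2
  have heq : 0.48 * α * (5 * t / α) ^ 2 = 12 * t ^ 2 / α := by
    field_simp; ring
  nlinarith [mul_le_mul_of_nonneg_left hNsq (by linarith : (0:ℝ) ≤ 0.48 * α)]
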